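/- Under Assumptions (A1) and (A3), define for ε, δ > 0 and s ≥ 0 the Taylor remainder R_s^{ε,δ} := ( f(x^δ(s)) − f(x(s)) − f'(x(s))·(x^δ(s) − x(s)) )/ε + ( κ(x^δ(s)) − κ(x(s)) − κ'(x(s))·(x^δ(s) − x(s)) )/ε + ( κ(x^δ(π_δ(s))) − κ(x^δ(s)) − κ'(x(s))·(x^δ(π_δ(s)) − x^δ(s)) )/ε. Then for every integer p ≥ 1 there exist ε₀ > 0 and a constant C > 0, independent of t, ε and δ, such that for all ε, δ ∈ (0, ε₀) and all t ≥ 0: |∫₀ᵗ E(s,t)·R_s^{ε,δ} ds|^p ≤ (C/ε^p)·( ε^{2p} + δ^{2p} + ε^{2p}·δ^p ). -/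

import Mathlib

/-!
Both flows stay in a fixed interval `[-B, B]`: `f` is strongly dissipative and `κ` is bounded,
so `x (f x + κ y) < 0` on its boundary. There the vector field is bounded by some `M`, hence the
sampled flow moves by at most `M δ` between sampling times, and a barrier argument for
`(x^δ - x)²`, based on the one-sided Lipschitz bound of `f` and `L_κ < λ`, gives
`|x^δ - x| ≤ C δ`. Taylor's formula then bounds the remainder pointwise by `A δ² / ε`, and
`∫₀ᵗ E(s,t) ds ≤ C_*` turns this into the estimate (only its `δ^{2p}` term is needed).

The integral equations carry Lean's junk value `∫ = 0` for non-integrable integrands, so the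
regularity of both flows has to be bootstrapped from the equations themselves.
-/

/-- The sampling map `π_δ(t) = δ·⌊t/δ⌋`. -/
noncomputable def piD (δ t : ℝ) : ℝ := δ * (⌊t / δ⌋ : ℤ)

open Set MeasureTheory Filter Topology

section SamplingMap

variable {δ : ℝ}

lemma piD_nonneg (hδ : 0 < δ) {s : ℝ} (hs : 0 ≤ s) : 0 ≤ piD δ s :=
  mul_nonneg hδ.le (by exact_mod_cast Int.floor_nonneg.mpr (div_nonneg hs hδ.le))

lemma piD_le (hδ : 0 < δ) (s : ℝ) : piD δ s ≤ s :=
  calc piD δ s ≤ δ * (s / δ) := mul_le_mul_of_nonneg_left (Int.floor_le _) hδ.le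
    _ = s := mul_div_cancel₀ s hδ.ne'

lemma lt_piD_add (hδ : 0 < δ) (s : ℝ) : s < piD δ s + δ := by
  have := (div_lt_iff₀' hδ).mp (Int.lt_floor_add_one (s / δ))
  rw [piD]
  linarith

lemma piD_eventually_eq (hδ : 0 < δ) (s : ℝ) : ∀ᶠ u in 𝓝[≥] s, piD δ u = piD δ s := by
  filter_upwards [Ico_mem_nhdsGE (lt_piD_add hδ s)] with u hu
  have hfloor : ⌊u / δ⌋ = ⌊s / δ⌋ := by
    refine Int.floor_eq_on_Ico _ _ ⟨(Int.floor_le _).trans (by gcongr; exact hu.1), ?_⟩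
    rw [div_lt_iff₀' hδ]
    have := hu.2
    rw [piD] at this
    linarith
  rw [piD, piD, hfloor]

lemma measurable_comp_piD (φ : ℝ → ℝ) : Measurable fun s => φ (piD δ s) :=
  (measurable_of_countable fun n : ℤ => φ (δ * n)).comp
    (Int.measurable_floor.comp (measurable_id.div_const δ))

end SamplingMap

lemma abs_le_of_hasDerivWithinAt_Ici {y y' : ℝ → ℝ} {a c ρ t₀ t : ℝ} (hρ : 0 < ρ)
    (hcρ : c < a * ρ) (hy : ContinuousOn y (Icc t₀ t))
    (hy' : ∀ u ∈ Ico t₀ t, HasDerivWithinAt y (y' u) (Ici u) u) (h₀ : |y t₀| ≤ ρ)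
    (hdis : ∀ u ∈ Ico t₀ t, y u * y' u ≤ -a * y u ^ 2 + c * |y u|) (ht : t₀ ≤ t) :
    |y t| ≤ ρ := by
  have hsq : ∀ u ∈ Icc t₀ t, y u ^ 2 ≤ ρ ^ 2 := by
    refine image_le_of_deriv_right_lt_deriv_boundary (f := fun u => y u ^ 2)
      (f' := fun u => 2 * y u ^ 1 * y' u) (B := fun _ => ρ ^ 2) (B' := fun _ => 0) (hy.pow 2)
      (fun u hu => (hy' u hu).pow 2) ?_ (fun _ => hasDerivAt_const _ _) ?_
    · simpa only [sq_abs] using pow_le_pow_left₀ (abs_nonneg _) h₀ 2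
    · intro u hu hsq
      -- on the boundary `|y u| = ρ` the dissipativity bound gives `y u * y' u ≤ ρ (c - a ρ) < 0`
      have habs : |y u| = ρ := by
        rwa [← sq_abs, sq_eq_sq₀ (abs_nonneg _) hρ.le] at hsq
      have := hdis u hu
      rw [hsq, habs] at this
      simp only [pow_one]
      nlinarith [mul_pos (sub_pos.mpr hcρ) hρ]
  exact abs_le_of_sq_le_sq (hsq t ⟨ht, le_rfl⟩) hρ.le

lemma abs_sub_sub_deriv_mul_le {F : ℝ → ℝ} (hF : Differentiable ℝ F)
    (hF' : Differentiable ℝ (deriv F)) {S : Set ℝ} (hS : Convex ℝ S) {M : ℝ}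
    (hM : ∀ y ∈ S, |deriv (deriv F) y| ≤ M) {a b : ℝ} (ha : a ∈ S) (hb : b ∈ S) :
    |F b - F a - deriv F a * (b - a)| ≤ M * (b - a) ^ 2 := by
  have hsub : uIcc a b ⊆ S := hS.ordConnected.uIcc_subset ha hb
  have hlip : ∀ y ∈ uIcc a b, ‖deriv F y - deriv F a‖ ≤ M * |b - a| := fun y hy =>
    calc ‖deriv F y - deriv F a‖ ≤ M * ‖y - a‖ :=
          (convex_uIcc a b).norm_image_sub_le_of_norm_deriv_le (fun z _ => hF' z)
            (fun z hz => hM z (hsub hz)) left_mem_uIcc hy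
      _ ≤ M * |b - a| :=
          mul_le_mul_of_nonneg_left (abs_sub_left_of_mem_uIcc hy) ((abs_nonneg _).trans (hM a ha))
  have hφ : ∀ y ∈ uIcc a b, HasDerivWithinAt (fun y => F y - deriv F a * y)
      (deriv F y - deriv F a) (uIcc a b) y := fun y _ =>
    ((hF y).hasDerivAt.sub
      ((hasDerivAt_id y).const_mul _ |>.congr_deriv (mul_one _))).hasDerivWithinAt
  have := (convex_uIcc a b).norm_image_sub_le_of_norm_hasDerivWithin_le hφ hlip
    left_mem_uIcc right_mem_uIcc
  rw [Real.norm_eq_abs, Real.norm_eq_abs, mul_assoc, abs_mul_abs_self] at this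
  calc |F b - F a - deriv F a * (b - a)|
      = |(F b - deriv F a * b) - (F a - deriv F a * a)| := by ring_nf
    _ ≤ M * (b - a) ^ 2 := by rw [sq]; exact this

lemma abs_remainder_le {f κ : ℝ → ℝ} (hfd : Differentiable ℝ f) (hfd2 : Differentiable ℝ (deriv f))
    (hκd : Differentiable ℝ κ) (hκd2 : Differentiable ℝ (deriv κ)) {B Mf K : ℝ}
    (hMf : ∀ y ∈ Icc (-B) B, |deriv (deriv f) y| ≤ Mf) (hK : ∀ y, |deriv (deriv κ) y| ≤ K)
    {a b b' η : ℝ} (ha : |a| ≤ B) (hb : |b| ≤ B) (hba : |b - a| ≤ η) (hb'b : |b' - b| ≤ η) :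
    |(f b - f a - deriv f a * (b - a)) + (κ b - κ a - deriv κ a * (b - a))
      + (κ b' - κ b - deriv κ a * (b' - b))| ≤ (Mf + 3 * K) * η ^ 2 := by
  have hK0 : 0 ≤ K := (abs_nonneg _).trans (hK 0)
  have hMf0 : 0 ≤ Mf := (abs_nonneg _).trans (hMf a (abs_le.mp ha))
  have hsq : ∀ {u}, |u| ≤ η → u ^ 2 ≤ η ^ 2 := fun h => by
    simpa only [sq_abs] using pow_le_pow_left₀ (abs_nonneg _) h 2
  have h₁ := abs_sub_sub_deriv_mul_le hfd hfd2 (convex_Icc _ _) hMf (abs_le.mp ha) (abs_le.mp hb)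
  have h₂ := abs_sub_sub_deriv_mul_le hκd hκd2 convex_univ (fun y _ => hK y) (mem_univ a)
    (mem_univ b)
  have h₃ := abs_sub_sub_deriv_mul_le hκd hκd2 convex_univ (fun y _ => hK y) (mem_univ b)
    (mem_univ b')
  have h₄ : |(deriv κ b - deriv κ a) * (b' - b)| ≤ K * η * η := by
    rw [abs_mul]
    have hκ' : |deriv κ b - deriv κ a| ≤ K * |b - a| :=
      convex_univ.norm_image_sub_le_of_norm_deriv_le (fun z _ => hκd2 z) (fun z _ => hK z)
        (mem_univ a) (mem_univ b)
    exact mul_le_mul (hκ'.trans (by gcongr)) hb'b (abs_nonneg _)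
      (mul_nonneg hK0 ((abs_nonneg _).trans hba))
  -- split the sampling term as a Taylor remainder at `b` plus a change of base point in `κ'`
  calc _ = |(f b - f a - deriv f a * (b - a)) + (κ b - κ a - deriv κ a * (b - a))
        + (κ b' - κ b - deriv κ b * (b' - b)) + (deriv κ b - deriv κ a) * (b' - b)| := by
        ring_nf
    _ ≤ Mf * η ^ 2 + K * η ^ 2 + K * η ^ 2 + K * η * η := by
        refine (abs_add_le _ _).trans (add_le_add ((abs_add_le _ _).trans (add_le_add
          ((abs_add_le _ _).trans (add_le_add ?_ ?_)) ?_)) h₄)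
        · exact h₁.trans (mul_le_mul_of_nonneg_left (hsq hba) hMf0)
        · exact h₂.trans (mul_le_mul_of_nonneg_left (hsq hba) hK0)
        · exact h₃.trans (mul_le_mul_of_nonneg_left (hsq hb'b) hK0)
    _ = (Mf + 3 * K) * η ^ 2 := by ring

lemma intervalIntegrable_exp_integral {h : ℝ → ℝ} {a b : ℝ}
    (hh : IntervalIntegrable h volume a b) :
    IntervalIntegrable (fun s => Real.exp (∫ u in s..b, h u)) volume a b :=
  (Real.continuous_exp.comp_continuousOn
    (intervalIntegral.continuousOn_primitive_interval_left
      ((intervalIntegrable_iff' (f := h) (μ := volume)).1 hh))).intervalIntegrable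

lemma abs_integral_mul_le {E R : ℝ → ℝ} {t b : ℝ} (ht : 0 ≤ t)
    (hE : IntervalIntegrable E volume 0 t) (hE0 : ∀ s, 0 ≤ E s) (hR : ∀ s ∈ Ioc 0 t, |R s| ≤ b) :
    |∫ s in (0 : ℝ)..t, E s * R s| ≤ (∫ s in (0 : ℝ)..t, E s) * b := by
  rw [← intervalIntegral.integral_mul_const]
  refine intervalIntegral.norm_integral_le_of_norm_le (f := fun s => E s * R s) ht
    (ae_of_all _ fun s hs => ?_) (hE.mul_const b)
  rw [Real.norm_eq_abs, abs_mul, abs_of_nonneg (hE0 s)]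
  exact mul_le_mul_of_nonneg_left (hR s hs) (hE0 s)

lemma pow_mul_sq_div_le {A ε δ : ℝ} (hA : 0 ≤ A) (hε : 0 < ε) (hδ : 0 < δ) (p : ℕ) :
    (A * δ ^ 2 / ε) ^ p ≤
      (A + 1) ^ p / ε ^ p * (ε ^ (2 * p) + δ ^ (2 * p) + ε ^ (2 * p) * δ ^ p) := by
  rw [div_pow, mul_pow, ← pow_mul, div_mul_eq_mul_div]
  gcongr
  · linarith
  · linarith [pow_pos hε (2 * p), mul_pos (pow_pos hε (2 * p)) (pow_pos hδ p)]

section IntegralEquation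

variable {x g : ℝ → ℝ} {x₀ lam c B M : ℝ}

lemma continuousOn_Icc_of_eq_integral (hx : ∀ t, 0 ≤ t → x t = x₀ + ∫ s in (0 : ℝ)..t, g s)
    {T : ℝ} (hT : 0 ≤ T) (hg : IntervalIntegrable g volume 0 T) : ContinuousOn x (Icc 0 T) := by
  have := intervalIntegral.continuousOn_primitive_interval' hg left_mem_uIcc
  rw [uIcc_of_le hT] at this
  exact (continuousOn_const.add this).congr fun u hu => hx u hu.1

lemma continuousWithinAt_Ici_of_eq_integral
    (hx : ∀ t, 0 ≤ t → x t = x₀ + ∫ s in (0 : ℝ)..t, g s) {t T : ℝ} (ht : 0 ≤ t) (htT : t < T)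
    (hg : IntervalIntegrable g volume 0 T) : ContinuousWithinAt x (Ici t) t :=
  ((continuousOn_Icc_of_eq_integral hx (ht.trans htT.le) hg).continuousWithinAt
    ⟨ht, htT.le⟩).mono_of_mem_nhdsWithin
    (mem_of_superset (Icc_mem_nhdsGE htT) (Icc_subset_Icc_left ht))

lemma hasDerivWithinAt_Ici_of_eq_integral
    (hx : ∀ t, 0 ≤ t → x t = x₀ + ∫ s in (0 : ℝ)..t, g s)
    (hgc : ∀ t, 0 ≤ t → ContinuousWithinAt x (Ici t) t → ContinuousWithinAt g (Ici t) t)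
    {t T : ℝ} (ht : 0 ≤ t) (htT : t < T) (hg : IntervalIntegrable g volume 0 T) :
    HasDerivWithinAt x (g t) (Ici t) t := by
  have hmeas : StronglyMeasurableAtFilter g (𝓝[>] t) volume :=
    ⟨Ioc 0 T, mem_of_superset (Ioc_mem_nhdsGT htT) (Ioc_subset_Ioc_left ht),
      ((intervalIntegrable_iff_integrableOn_Ioc_of_le (ht.trans htT.le)).mp
        hg).aestronglyMeasurable⟩
  have := intervalIntegral.integral_hasDerivWithinAt_right (s := Ici t)
    (hg.mono_set (uIcc_subset_uIcc left_mem_uIcc (mem_uIcc_of_le ht htT.le))) hmeas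
    ((hgc t ht (continuousWithinAt_Ici_of_eq_integral hx ht htT hg)).mono Ioi_subset_Ici_self)
  exact (this.const_add x₀).congr (fun u hu => hx u (ht.trans hu)) (hx t ht)

lemma abs_le_of_eq_integral (hx : ∀ t, 0 ≤ t → x t = x₀ + ∫ s in (0 : ℝ)..t, g s)
    (hgc : ∀ t, 0 ≤ t → ContinuousWithinAt x (Ici t) t → ContinuousWithinAt g (Ici t) t)
    (hdis : ∀ s, x s * g s ≤ -lam * x s ^ 2 + c * |x s|)
    (hB : 0 < B) (hx₀ : |x₀| ≤ B) (hcB : c < lam * B)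
    {T : ℝ} (hT : 0 ≤ T) (hg : IntervalIntegrable g volume 0 T) : |x T| ≤ B :=
  abs_le_of_hasDerivWithinAt_Ici hB hcB (continuousOn_Icc_of_eq_integral hx hT hg)
    (fun u hu => hasDerivWithinAt_Ici_of_eq_integral hx hgc hu.1 hu.2 hg)
    (by simpa [hx 0 le_rfl] using hx₀) (fun u _ => hdis u) hT

lemma intervalIntegrable_of_eq_integral
    (hx : ∀ t, 0 ≤ t → x t = x₀ + ∫ s in (0 : ℝ)..t, g s)
    (hgc : ∀ t, 0 ≤ t → ContinuousWithinAt x (Ici t) t → ContinuousWithinAt g (Ici t) t)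
    (hgm : ∀ S : Set ℝ, AEMeasurable x (volume.restrict S) →
      AEStronglyMeasurable g (volume.restrict S))
    (hdis : ∀ s, x s * g s ≤ -lam * x s ^ 2 + c * |x s|) (hgM : ∀ s, |x s| ≤ B → |g s| ≤ M)
    (hB : 0 < B) (hx₀ : |x₀| ≤ B) (hcB : c < lam * B) {t₀ : ℝ} (ht₀ : 0 ≤ t₀) :
    IntervalIntegrable g volume 0 t₀ := by
  by_contra hbad
  -- `T` is the first time at which integrability fails; beyond it the junk value `∫ = 0`
  -- freezes `x` at `x₀`, so `g` is bounded on both sides of `T` and hence integrable after all.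
  set A := {t | 0 ≤ t ∧ ¬IntervalIntegrable g volume 0 t}
  have hA : A.Nonempty := ⟨t₀, ht₀, hbad⟩
  have hAbdd : BddBelow A := ⟨0, fun _ ha => ha.1⟩
  set T := sInf A
  have hT : 0 ≤ T := le_csInf hA fun _ ha => ha.1
  have hTt₀ : T ≤ t₀ := csInf_le hAbdd ⟨ht₀, hbad⟩
  have below : ∀ t, 0 ≤ t → t < T → IntervalIntegrable g volume 0 t := fun t ht htT =>
    by_contra fun h => (csInf_le hAbdd ⟨ht, h⟩).not_gt htT
  have above : ∀ s, T < s → x s = x₀ := by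
    intro s hs
    obtain ⟨a, ⟨ha, hna⟩, has⟩ := exists_lt_of_csInf_lt hA hs
    rw [hx s (hT.trans hs.le), intervalIntegral.integral_undef fun h =>
      hna (h.mono_set (uIcc_subset_uIcc left_mem_uIcc (mem_uIcc_of_le ha has.le))), add_zero]
  have hcont : ContinuousOn x (Ioo 0 T) := fun u hu =>
    have hu' : u < (u + T) / 2 := by linarith [hu.2]
    ((continuousOn_Icc_of_eq_integral hx (by linarith [hu.1]) (below _ (by linarith [hu.1])
      (by linarith [hu.2]))).continuousAt (Icc_mem_nhds hu.1 hu')).continuousWithinAt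
  have hconst : IntegrableOn (fun _ => M) (Ioc 0 t₀) :=
    integrableOn_const measure_Ioc_lt_top.ne
  have h₁ : IntegrableOn g (Ioc 0 T) := by
    rw [integrableOn_Ioc_iff_integrableOn_Ioo]
    refine (hconst.mono_set (Ioo_subset_Ioc_self.trans (Ioc_subset_Ioc_right hTt₀))).mono'
      (hgm _ (hcont.aemeasurable measurableSet_Ioo)) ?_
    filter_upwards [ae_restrict_mem measurableSet_Ioo] with s hs
    exact hgM s (abs_le_of_eq_integral hx hgc hdis hB hx₀ hcB hs.1.le (below s hs.1.le hs.2))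
  have h₂ : IntegrableOn g (Ioc T t₀) := by
    have hxc : x =ᵐ[volume.restrict (Ioc T t₀)] fun _ => x₀ := by
      filter_upwards [ae_restrict_mem measurableSet_Ioc] with s hs using above s hs.1
    refine (hconst.mono_set (Ioc_subset_Ioc_left hT)).mono'
      (hgm _ (aemeasurable_const.congr hxc.symm)) ?_
    filter_upwards [ae_restrict_mem measurableSet_Ioc] with s hs
    exact hgM s (by rw [above s hs.1]; exact hx₀)
  exact hbad ((intervalIntegrable_iff_integrableOn_Ioc_of_le ht₀).mpr
    (Ioc_union_Ioc_eq_Ioc hT hTt₀ ▸ h₁.union h₂))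

lemma continuousOn_Ici_of_eq_integral (hx : ∀ t, 0 ≤ t → x t = x₀ + ∫ s in (0 : ℝ)..t, g s)
    (hg : ∀ t, 0 ≤ t → IntervalIntegrable g volume 0 t) : ContinuousOn x (Ici 0) := fun t ht =>
  have ht' : 0 ≤ t + 1 := by linarith [mem_Ici.mp ht]
  ((continuousOn_Icc_of_eq_integral hx ht' (hg _ ht')).continuousWithinAt
    ⟨ht, by linarith⟩).mono_of_mem_nhdsWithin
    (mem_nhdsWithin.mpr ⟨Iio (t + 1), isOpen_Iio, lt_add_one t, fun _ hu => ⟨hu.2, hu.1.le⟩⟩)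

lemma abs_sub_le_of_eq_integral (hx : ∀ t, 0 ≤ t → x t = x₀ + ∫ s in (0 : ℝ)..t, g s)
    (hg : ∀ t, 0 ≤ t → IntervalIntegrable g volume 0 t) {r s : ℝ} (hr : 0 ≤ r) (hrs : r ≤ s)
    (hgM : ∀ u ∈ Ioc r s, |g u| ≤ M) : |x s - x r| ≤ M * (s - r) := by
  rw [hx s (hr.trans hrs), hx r hr, add_sub_add_left_eq_sub,
    intervalIntegral.integral_interval_sub_left (hg s (hr.trans hrs)) (hg r hr)]
  simpa [abs_of_nonneg (sub_nonneg.mpr hrs)] using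
    intervalIntegral.norm_integral_le_of_norm_le_const (f := g) (C := M) (a := r) (b := s)
      (by rwa [uIoc_of_le hrs])

end IntegralEquation

section ClosedLoop

variable {f κ : ℝ → ℝ} {lam Lκ γ : ℝ}

lemma mul_add_le_of_contraction (hcontr : ∀ a b, (a - b) * (f a - f b) ≤ -lam * (a - b) ^ 2)
    (hκbd : ∀ a, |κ a| ≤ γ) (a b : ℝ) :
    a * (f a + κ b) ≤ -lam * a ^ 2 + (|f 0| + γ) * |a| := by
  have h₁ := hcontr a 0
  have h₂ : a * f 0 ≤ |f 0| * |a| := (le_abs_self _).trans_eq (by rw [abs_mul, mul_comm])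
  have h₃ : a * κ b ≤ γ * |a| := (le_abs_self _).trans <| by
    rw [abs_mul, mul_comm]; exact mul_le_mul_of_nonneg_right (hκbd b) (abs_nonneg a)
  simp only [sub_zero] at h₁
  nlinarith

lemma sub_mul_sub_le_of_contraction (hcontr : ∀ a b, (a - b) * (f a - f b) ≤ -lam * (a - b) ^ 2)
    (hκLip : ∀ a b, |κ a - κ b| ≤ Lκ * |a - b|) (hLκ : 0 ≤ Lκ) (a a' b : ℝ) :
    (a - a') * (f a + κ b - (f a' + κ a')) ≤
      -(lam - Lκ) * (a - a') ^ 2 + Lκ * |b - a| * |a - a'| := by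
  have h₁ := hcontr a a'
  have h₂ : (a - a') * (κ b - κ a') ≤ |a - a'| * (Lκ * (|b - a| + |a - a'|)) :=
    calc (a - a') * (κ b - κ a') ≤ |a - a'| * |κ b - κ a'| := (le_abs_self _).trans_eq (abs_mul _ _)
      _ ≤ |a - a'| * (Lκ * |b - a'|) := by gcongr; exact hκLip _ _
      _ ≤ |a - a'| * (Lκ * (|b - a| + |a - a'|)) := by
          gcongr; exact (abs_sub_le _ _ _)
  have h₃ : |a - a'| * |a - a'| = (a - a') ^ 2 := by rw [abs_mul_abs_self, sq]
  nlinarith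

variable {x₀ B M : ℝ} {x z : ℝ → ℝ}

lemma closedLoop_regular (hx : ∀ t, 0 ≤ t → x t = x₀ + ∫ s in (0 : ℝ)..t, (f (x s) + κ (z s)))
    (hf : Continuous f) (hκ : Continuous κ)
    (hcontr : ∀ a b, (a - b) * (f a - f b) ≤ -lam * (a - b) ^ 2) (hκbd : ∀ a, |κ a| ≤ γ)
    (hzc : ∀ t, 0 ≤ t → ContinuousWithinAt x (Ici t) t → ContinuousWithinAt z (Ici t) t)
    (hzm : ∀ S : Set ℝ, AEMeasurable x (volume.restrict S) → AEMeasurable z (volume.restrict S))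
    (hB : 0 < B) (hx₀ : |x₀| ≤ B) (hcB : |f 0| + γ < lam * B)
    (hfM : ∀ a, |a| ≤ B → |f a| + γ ≤ M) :
    ContinuousOn x (Ici 0) ∧ ∀ t, 0 ≤ t → |x t| ≤ B ∧
      IntervalIntegrable (fun s => f (x s) + κ (z s)) volume 0 t ∧
      HasDerivWithinAt x (f (x t) + κ (z t)) (Ici t) t := by
  have hgc : ∀ t, 0 ≤ t → ContinuousWithinAt x (Ici t) t →
      ContinuousWithinAt (fun s => f (x s) + κ (z s)) (Ici t) t := fun t ht h =>
    (hf.continuousAt.comp_continuousWithinAt h).add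
      (hκ.continuousAt.comp_continuousWithinAt (hzc t ht h))
  have hdis : ∀ s, x s * (f (x s) + κ (z s)) ≤ -lam * x s ^ 2 + (|f 0| + γ) * |x s| :=
    fun s => mul_add_le_of_contraction hcontr hκbd _ _
  have hint : ∀ t, 0 ≤ t → IntervalIntegrable (fun s => f (x s) + κ (z s)) volume 0 t :=
    fun t => intervalIntegrable_of_eq_integral hx hgc
      (fun S h => ((hf.measurable.comp_aemeasurable h).add
        (hκ.measurable.comp_aemeasurable (hzm S h))).aestronglyMeasurable)
      hdis (fun s hs => (abs_add_le _ _).trans ((add_le_add_right (hκbd _) _).trans (hfM _ hs)))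
      hB hx₀ hcB
  exact ⟨continuousOn_Ici_of_eq_integral hx hint, fun t ht =>
    ⟨abs_le_of_eq_integral hx hgc hdis hB hx₀ hcB ht (hint t ht), hint t ht,
      hasDerivWithinAt_Ici_of_eq_integral hx hgc ht (lt_add_one t) (hint _ (by linarith))⟩⟩

lemma abs_sub_le_of_closedLoop {y : ℝ → ℝ} {η ρ : ℝ}
    (hcontr : ∀ a b, (a - b) * (f a - f b) ≤ -lam * (a - b) ^ 2)
    (hκLip : ∀ a b, |κ a - κ b| ≤ Lκ * |a - b|) (hLκ : 0 ≤ Lκ) (hρ : 0 < ρ)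
    (hηρ : Lκ * η < (lam - Lκ) * ρ) (hxc : ContinuousOn x (Ici 0)) (hyc : ContinuousOn y (Ici 0))
    (hx' : ∀ t, 0 ≤ t → HasDerivWithinAt x (f (x t) + κ (x t)) (Ici t) t)
    (hy' : ∀ t, 0 ≤ t → HasDerivWithinAt y (f (y t) + κ (z t)) (Ici t) t)
    (h₀ : y 0 = x 0) (hzy : ∀ t, 0 ≤ t → |z t - y t| ≤ η) {s : ℝ} (hs : 0 ≤ s) :
    |y s - x s| ≤ ρ :=
  abs_le_of_hasDerivWithinAt_Ici (y := fun u => y u - x u) hρ hηρ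
    ((hyc.sub hxc).mono Icc_subset_Ici_self) (fun u hu => (hy' u hu.1).sub (hx' u hu.1))
    (by simpa [h₀] using hρ.le)
    (fun u hu => (sub_mul_sub_le_of_contraction hcontr hκLip hLκ _ _ _).trans <| by
      gcongr; exact hzy u hu.1) hs

end ClosedLoop

section SampledData

variable {f κ x : ℝ → ℝ} {xd : ℝ → ℝ → ℝ} {x₀ lam Lκ γ K cf : ℝ} {rf : ℕ}

lemma sampled_flow_estimates (hLκ : 0 ≤ Lκ) (hLκlam : Lκ < lam) (hγ : 0 ≤ γ)
    (hcontr : ∀ a b, (a - b) * (f a - f b) ≤ -lam * (a - b) ^ 2)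
    (hκLip : ∀ a b, |κ a - κ b| ≤ Lκ * |a - b|) (hκbd : ∀ a, |κ a| ≤ γ) (hf : Continuous f) (hκ : Continuous κ)
    (hx : ∀ t, 0 ≤ t → x t = x₀ + ∫ s in (0 : ℝ)..t, (f (x s) + κ (x s)))
    (hxd : ∀ δ, 0 < δ → ∀ t, 0 ≤ t →
      xd δ t = x₀ + ∫ s in (0 : ℝ)..t, (f (xd δ s) + κ (xd δ (piD δ s)))) :
    ∃ B C : ℝ, 0 ≤ C ∧ ContinuousOn x (Ici 0) ∧ ∀ δ, 0 < δ → ∀ s, 0 ≤ s →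
      |x s| ≤ B ∧ |xd δ s| ≤ B ∧ |xd δ s - x s| ≤ C * δ ∧ |xd δ (piD δ s) - xd δ s| ≤ C * δ := by
  have hlam : 0 < lam := hLκ.trans_lt hLκlam
  set B := |x₀| + (|f 0| + γ) / lam + 1
  have hB : 0 < B := by positivity
  have hx₀ : |x₀| ≤ B := by linarith [show 0 ≤ (|f 0| + γ) / lam by positivity]
  have hcB : |f 0| + γ < lam * B := by
    have : lam * B = lam * |x₀| + (|f 0| + γ) + lam := by simp only [B]; field_simp
    nlinarith [abs_nonneg x₀]
  obtain ⟨Mf, hMf⟩ := isCompact_Icc.exists_bound_of_continuousOn (s := Icc (-B) B) hf.continuousOn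
  set M := Mf + γ
  have hfM : ∀ a, |a| ≤ B → |f a| + γ ≤ M := fun a ha =>
    add_le_add_left (hMf a (abs_le.mp ha)) γ
  have hM : 0 ≤ M := (add_nonneg (abs_nonneg _) hγ).trans (hfM 0 (by simpa using hB.le))
  obtain ⟨hxc, hxr⟩ := closedLoop_regular hx hf hκ hcontr hκbd (fun _ _ h => h) (fun _ h => h)
    hB hx₀ hcB hfM
  set C := lam * (M + 1) / (lam - Lκ)
  have hlamLκ : 0 < lam - Lκ := sub_pos.mpr hLκlam
  have hMC : M ≤ C := by
    rw [le_div_iff₀ hlamLκ]; nlinarith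
  refine ⟨B, C, hM.trans hMC, hxc, fun δ hδ => ?_⟩
  obtain ⟨hxdc, hxdr⟩ := closedLoop_regular (hxd δ hδ) hf hκ hcontr hκbd
    (fun t _ _ => continuousWithinAt_const.congr_of_eventuallyEq
      ((piD_eventually_eq hδ t).mono fun _ h => by simp only [h]) rfl)
    (fun _ _ => (measurable_comp_piD _).aemeasurable) hB hx₀ hcB hfM
  have hhold : ∀ s, 0 ≤ s → |xd δ (piD δ s) - xd δ s| ≤ M * δ := fun s hs => by
    rw [abs_sub_comm]
    refine (abs_sub_le_of_eq_integral (M := M) (hxd δ hδ) (fun t ht => (hxdr t ht).2.1)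
      (piD_nonneg hδ hs) (piD_le hδ s) fun u hu => ?_).trans ?_
    · exact (abs_add_le _ _).trans ((add_le_add_right (hκbd _) _).trans
        (hfM _ (hxdr u ((piD_nonneg hδ hs).trans hu.1.le)).1))
    · have := lt_piD_add hδ s
      gcongr; linarith
  have hCM : Lκ * (M * δ) < (lam - Lκ) * (C * δ) := by
    have : (lam - Lκ) * C = lam * (M + 1) := mul_div_cancel₀ _ hlamLκ.ne'
    rw [← mul_assoc (lam - Lκ), this]
    nlinarith [mul_nonneg hM hδ.le]
  have herr : ∀ s, 0 ≤ s → |xd δ s - x s| ≤ C * δ := fun s hs =>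
    abs_sub_le_of_closedLoop hcontr hκLip hLκ (by positivity) hCM hxc hxdc
      (fun t ht => (hxr t ht).2.2) (fun t ht => (hxdr t ht).2.2)
      (by rw [hx 0 le_rfl, hxd δ hδ 0 le_rfl]; simp) hhold hs
  exact fun s hs => ⟨(hxr s hs).1, (hxdr s hs).1, herr s hs, (hhold s hs).trans (by gcongr)⟩

lemma sampled_remainder_estimate (hLκ : 0 ≤ Lκ) (hLκlam : Lκ < lam) (hγ : 0 ≤ γ)
    (hcontr : ∀ a b, (a - b) * (f a - f b) ≤ -lam * (a - b) ^ 2)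
    (hκLip : ∀ a b, |κ a - κ b| ≤ Lκ * |a - b|) (hκbd : ∀ a, |κ a| ≤ γ) (hfd : Differentiable ℝ f) (hfd2 : Differentiable ℝ (deriv f))
    (hκd : Differentiable ℝ κ) (hκd2 : Differentiable ℝ (deriv κ))
    (hK : ∀ y, |deriv (deriv κ) y| ≤ K) (hf2 : ∀ y, |deriv (deriv f) y| ≤ cf * (1 + |y| ^ rf))
    (hx : ∀ t, 0 ≤ t → x t = x₀ + ∫ s in (0 : ℝ)..t, (f (x s) + κ (x s)))
    (hxd : ∀ δ, 0 < δ → ∀ t, 0 ≤ t →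
      xd δ t = x₀ + ∫ s in (0 : ℝ)..t, (f (xd δ s) + κ (xd δ (piD δ s)))) :
    ∃ A : ℝ, 0 ≤ A ∧ ContinuousOn x (Ici 0) ∧ ∀ δ, 0 < δ → ∀ s, 0 ≤ s →
      |(f (xd δ s) - f (x s) - deriv f (x s) * (xd δ s - x s))
        + (κ (xd δ s) - κ (x s) - deriv κ (x s) * (xd δ s - x s))
        + (κ (xd δ (piD δ s)) - κ (xd δ s) - deriv κ (x s) * (xd δ (piD δ s) - xd δ s))|
        ≤ A * δ ^ 2 := by
  obtain ⟨B, C, hC, hxc, hest⟩ := sampled_flow_estimates hLκ hLκlam hγ hcontr hκLip hκbd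
    hfd.continuous hκd.continuous hx hxd
  have hB : 0 ≤ B := (abs_nonneg _).trans (hest 1 one_pos 0 le_rfl).1
  have hcf : 0 ≤ cf := by
    nlinarith [hf2 0, abs_nonneg (deriv (deriv f) 0), pow_nonneg (abs_nonneg (0 : ℝ)) rf]
  have hMf : ∀ y ∈ Icc (-B) B, |deriv (deriv f) y| ≤ cf * (1 + B ^ rf) := fun y hy =>
    (hf2 y).trans (by gcongr; exact abs_le.mpr hy)
  have hK0 : 0 ≤ K := (abs_nonneg _).trans (hK 0)
  refine ⟨(cf * (1 + B ^ rf) + 3 * K) * C ^ 2, by positivity, hxc, fun δ hδ s hs => ?_⟩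
  obtain ⟨hxs, hxds, herr, hhold⟩ := hest δ hδ s hs
  calc _ ≤ (cf * (1 + B ^ rf) + 3 * K) * (C * δ) ^ 2 :=
        abs_remainder_le hfd hfd2 hκd hκd2 hMf hK hxs hxds herr hhold
    _ = (cf * (1 + B ^ rf) + 3 * K) * C ^ 2 * δ ^ 2 := by ring

end SampledData

theorem stmt19_general
    (f κ : ℝ → ℝ) (x₀ : ℝ) (x : ℝ → ℝ)
    -- Assumption (A1)
    (lam Lκ γ : ℝ)
    (hLκ : 0 < Lκ) (hγ : 0 < γ)
    (hcontr : ∀ a b : ℝ, (a - b) * (f a - f b) ≤ -lam * (a - b) ^ 2)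
    (hκLip : ∀ a b : ℝ, |κ a - κ b| ≤ Lκ * |a - b|)
    (hgap : lam / 2 - Lκ > 0)
    (hκbd : ∀ a : ℝ, |κ a| ≤ γ)
    -- Assumption (A3)
    (hfd : Differentiable ℝ f) (hfd2 : Differentiable ℝ (deriv f))
    (hκd : Differentiable ℝ κ) (hκd2 : Differentiable ℝ (deriv κ))
    (K : ℝ) (hK : ∀ y : ℝ, |deriv (deriv κ) y| ≤ K)
    (cf : ℝ) (rf : ℕ) (hf2 : ∀ y : ℝ, |deriv (deriv f) y| ≤ cf * (1 + |y| ^ rf))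
    (Cstar : ℝ) (hCstar : 0 < Cstar)
    (hint : ∀ m : ℕ, (m = 1 ∨ m = 2) → ∀ t : ℝ, 0 ≤ t →
      (∫ s in (0:ℝ)..t,
        Real.exp ((m : ℝ) * ∫ u in s..t, (deriv f (x u) + deriv κ (x u)))) ≤ Cstar)
    -- the closed-loop ODE `dx/dt = f(x) + κ(x)`, `x(0) = x₀`
    (hx : ∀ t : ℝ, 0 ≤ t → x t = x₀ + ∫ s in (0:ℝ)..t, (f (x s) + κ (x s)))
    -- the sampled-data closed-loop system
    (xd : ℝ → ℝ → ℝ)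
    (hxd : ∀ δ : ℝ, 0 < δ → ∀ t : ℝ, 0 ≤ t →
      xd δ t = x₀ + ∫ s in (0:ℝ)..t, (f (xd δ s) + κ (xd δ (piD δ s))))
    :
    ∀ p : ℕ, 1 ≤ p → ∃ ε₀ : ℝ, 0 < ε₀ ∧ ∃ C : ℝ, 0 < C ∧
      ∀ ε δ : ℝ, 0 < ε → ε < ε₀ → 0 < δ → δ < ε₀ → ∀ t : ℝ, 0 ≤ t →
        |∫ s in (0:ℝ)..t,
            Real.exp (∫ u in s..t, (deriv f (x u) + deriv κ (x u))) *
              ((f (xd δ s) - f (x s) - deriv f (x s) * (xd δ s - x s)) / ε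
                + (κ (xd δ s) - κ (x s) - deriv κ (x s) * (xd δ s - x s)) / ε
                + (κ (xd δ (piD δ s)) - κ (xd δ s)
                    - deriv κ (x s) * (xd δ (piD δ s) - xd δ s)) / ε)| ^ p
          ≤ (C / ε ^ p) * (ε ^ (2 * p) + δ ^ (2 * p) + ε ^ (2 * p) * δ ^ p) := by
  intro p _
  obtain ⟨A, hA, hxc, hR⟩ := sampled_remainder_estimate hLκ.le (by linarith) hγ.le hcontr hκLip
    hκbd hfd hfd2 hκd hκd2 hK hf2 hx hxd
  refine ⟨1, one_pos, (Cstar * A + 1) ^ p, by positivity, fun ε δ hε _ hδ _ t ht => ?_⟩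
  have hE : IntervalIntegrable (fun s => Real.exp (∫ u in s..t, (deriv f (x u) + deriv κ (x u))))
      volume 0 t :=
    intervalIntegrable_exp_integral <| ContinuousOn.intervalIntegrable <|
      ((hfd2.continuous.comp_continuousOn hxc).add (hκd2.continuous.comp_continuousOn hxc)).mono
        (by rw [uIcc_of_le ht]; exact Icc_subset_Ici_self)
  have hEint := hint 1 (Or.inl rfl) t ht
  simp only [Nat.cast_one, one_mul] at hEint
  calc _ ≤ (Cstar * A * δ ^ 2 / ε) ^ p := by
        refine pow_le_pow_left₀ (abs_nonneg _) ((abs_integral_mul_le (b := A * δ ^ 2 / ε) ht hE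
          (fun _ => (Real.exp_pos _).le) fun s hs => ?_).trans ?_) p
        · rw [← add_div, ← add_div, abs_div, abs_of_pos hε]
          exact div_le_div_of_nonneg_right (hR δ hδ s hs.1.le) hε.le
        · exact (mul_le_mul_of_nonneg_right hEint (by positivity)).trans_eq (by ring)
    _ ≤ _ := pow_mul_sq_div_le (by positivity) hε hδ p

/-- Noiseless remainder estimate: the Taylor remainder
`R_s^{ε,δ} = (f(x^δ(s)) − f(x(s)) − f'(x(s))·(x^δ(s) − x(s)))/ε
+ (κ(x^δ(s)) − κ(x(s)) − κ'(x(s))·(x^δ(s) − x(s)))/ε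
+ (κ(x^δ(π_δ(s))) − κ(x^δ(s)) − κ'(x(s))·(x^δ(π_δ(s)) − x^δ(s)))/ε`, integrated against
`E(s,t) = exp(∫ₛᵗ (f'(x(u)) + κ'(x(u))) du)`, is uniformly small. -/
theorem stmt19
    (f κ : ℝ → ℝ) (x₀ : ℝ) (x : ℝ → ℝ)
    -- Assumption (A1)
    (lam ξ μ Lκ γ : ℝ) (q : ℕ)
    (hlam : 0 < lam) (hξ : 0 < ξ) (hμ : 0 < μ) (hLκ : 0 < Lκ) (hγ : 0 < γ)
    (hcontr : ∀ a b : ℝ, (a - b) * (f a - f b) ≤ -lam * (a - b) ^ 2)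
    (hfLip : ∀ a b : ℝ, |f a - f b| ≤ (ξ * (|a| ^ q + |b| ^ q) + μ) * |a - b|)
    (hκLip : ∀ a b : ℝ, |κ a - κ b| ≤ Lκ * |a - b|)
    (hgap : lam / 2 - Lκ > 0)
    (hκbd : ∀ a : ℝ, |κ a| ≤ γ)
    -- Assumption (A3)
    (hfd : Differentiable ℝ f) (hfd2 : Differentiable ℝ (deriv f))
    (hκd : Differentiable ℝ κ) (hκd2 : Differentiable ℝ (deriv κ))
    (K : ℝ) (hK : ∀ y : ℝ, |deriv (deriv κ) y| ≤ K)
    (cf : ℝ) (rf : ℕ) (hf2 : ∀ y : ℝ, |deriv (deriv f) y| ≤ cf * (1 + |y| ^ rf))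
    (Cstar : ℝ) (hCstar : 0 < Cstar)
    (hint : ∀ m : ℕ, (m = 1 ∨ m = 2) → ∀ t : ℝ, 0 ≤ t →
      (∫ s in (0:ℝ)..t,
        Real.exp ((m : ℝ) * ∫ u in s..t, (deriv f (x u) + deriv κ (x u)))) ≤ Cstar)
    -- the closed-loop ODE `dx/dt = f(x) + κ(x)`, `x(0) = x₀`
    (hx : ∀ t : ℝ, 0 ≤ t → x t = x₀ + ∫ s in (0:ℝ)..t, (f (x s) + κ (x s)))
    -- the sampled-data closed-loop system
    (xd : ℝ → ℝ → ℝ)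
    (hxd : ∀ δ : ℝ, 0 < δ → ∀ t : ℝ, 0 ≤ t →
      xd δ t = x₀ + ∫ s in (0:ℝ)..t, (f (xd δ s) + κ (xd δ (piD δ s))))
    :
    ∀ p : ℕ, 1 ≤ p → ∃ ε₀ : ℝ, 0 < ε₀ ∧ ∃ C : ℝ, 0 < C ∧
      ∀ ε δ : ℝ, 0 < ε → ε < ε₀ → 0 < δ → δ < ε₀ → ∀ t : ℝ, 0 ≤ t →
        |∫ s in (0:ℝ)..t,
            Real.exp (∫ u in s..t, (deriv f (x u) + deriv κ (x u))) *
              ((f (xd δ s) - f (x s) - deriv f (x s) * (xd δ s - x s)) / ε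
                + (κ (xd δ s) - κ (x s) - deriv κ (x s) * (xd δ s - x s)) / ε
                + (κ (xd δ (piD δ s)) - κ (xd δ s)
                    - deriv κ (x s) * (xd δ (piD δ s) - xd δ s)) / ε)| ^ p
          ≤ (C / ε ^ p) * (ε ^ (2 * p) + δ ^ (2 * p) + ε ^ (2 * p) * δ ^ p) :=
  stmt19_general f κ x₀ x lam Lκ γ hLκ hγ hcontr hκLip hgap hκbd hfd hfd2 hκd hκd2 K hK cf rf hf2
    Cstar hCstar hint hx xd hxd
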